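/- Suppose collections U and V of coalitions are both T0-balanced. Then span(U) ∪ span(V) restricted to coalitions (i.e., the set of all coalitions whose indicator lies in the span of U together with those whose indicator lies in the span of V) is T0-balanced. -/

import Mathlib

open Finset

/-- Indicator vector of a coalition `S ⊆ {1,…,n}` in `ℝ^n`. -/
noncomputable def ind (n : ℕ) (S : Finset (Fin n)) : Fin n → ℝ := fun i => if i ∈ S then 1 else 0

/-- `T` is `T0`-balanced: there are weights `γ ≥ 0` on `T0` and `ω > 0` on `T` with
`e(N) = Σ_{S∈T0} γ_S e(S) + Σ_{S∈T} ω_S e(S)`. -/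
def IsT0Balanced (n : ℕ) (T0 T : Finset (Finset (Fin n))) : Prop :=
  ∃ γ ω : Finset (Fin n) → ℝ,
    (∀ S ∈ T0, 0 ≤ γ S) ∧ (∀ S ∈ T, 0 < ω S) ∧
    (∑ S ∈ T0, γ S • ind n S) + (∑ S ∈ T, ω S • ind n S) = ind n Finset.univ

open Classical in
noncomputable def spanColl (n : ℕ) (T : Finset (Finset (Fin n))) : Finset (Finset (Fin n)) :=
  Finset.univ.filter (fun S => ind n S ∈ Submodule.span ℝ (ind n '' (T : Set (Finset (Fin n)))))

/-- Rank of a collection: dimension of the span of its indicator vectors. -/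
noncomputable def rk (n : ℕ) (T : Finset (Finset (Fin n))) : ℕ :=
  Module.finrank ℝ (Submodule.span ℝ (ind n '' (T : Set (Finset (Fin n)))))

-- helper: small epsilon
lemma eps_exists {α : Type*} (s : Finset α) (ω c : α → ℝ) (h : ∀ x ∈ s, 0 < ω x) :
    ∃ ε : ℝ, 0 < ε ∧ ∀ x ∈ s, ε * |c x| < ω x := by
  classical
  induction s using Finset.induction with
  | empty => exact ⟨1, one_pos, by simp⟩
  | insert a s ha ih =>
    obtain ⟨ε, hε, hεs⟩ := ih (fun x hx => h x (Finset.mem_insert_of_mem hx))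
    have hωa : 0 < ω a := h a (Finset.mem_insert_self _ _)
    have hden : (0:ℝ) < 1 + |c a| := by positivity
    refine ⟨min ε (ω a / (1 + |c a|)), lt_min hε (by positivity), ?_⟩
    intro x hx
    rcases Finset.mem_insert.mp hx with h' | hx
    · subst h'
      have h1 : min ε (ω x / (1 + |c x|)) ≤ ω x / (1 + |c x|) := min_le_right _ _
      have h2 : ω x / (1 + |c x|) * |c x| < ω x := by
        rw [div_mul_eq_mul_div, div_lt_iff₀ hden]
        nlinarith [abs_nonneg (c x)]
      calc min ε (ω x / (1 + |c x|)) * |c x| ≤ ω x / (1 + |c x|) * |c x| :=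
            mul_le_mul_of_nonneg_right h1 (abs_nonneg _)
        _ < ω x := h2
    · calc min ε (ω a / (1 + |c a|)) * |c x| ≤ ε * |c x| :=
            mul_le_mul_of_nonneg_right (min_le_left _ _) (abs_nonneg _)
        _ < ω x := hεs x hx

lemma ind_inj (n : ℕ) : Function.Injective (ind n) := by
  intro S T h
  ext i
  have := congrFun h i
  simp only [ind] at this
  by_cases hS : i ∈ S <;> by_cases hT : i ∈ T <;> simp [hS, hT] at this ⊢

lemma insert_balanced (n : ℕ) (T0 T : Finset (Finset (Fin n)))
    (h : IsT0Balanced n T0 T) (S : Finset (Fin n))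
    (hS : ind n S ∈ Submodule.span ℝ (ind n '' (T : Set (Finset (Fin n))))) :
    IsT0Balanced n T0 (insert S T) := by
  classical
  by_cases hmem : S ∈ T
  · rwa [Finset.insert_eq_self.mpr hmem]
  obtain ⟨γ, ω, hγ, hω, hsum⟩ := h
  rw [show (ind n '' (T : Set (Finset (Fin n)))) = ↑(T.image (ind n)) by
        simp [Finset.coe_image]] at hS
  obtain ⟨f, -, hf⟩ := Submodule.mem_span_finset.mp hS
  set c : Finset (Fin n) → ℝ := fun T' => f (ind n T') with hc_def
  have hc : ∑ T' ∈ T, c T' • ind n T' = ind n S := by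
    rw [← hf, Finset.sum_image (fun x _ y _ hxy => ind_inj n hxy)]
  obtain ⟨ε, hε, hεT⟩ := eps_exists T ω c hω
  refine ⟨γ, fun T' => if T' = S then ε else ω T' - ε * c T', hγ, ?_, ?_⟩
  · intro T' hT'
    rcases mem_insert.mp hT' with rfl | hT'
    · simp [hε]
    · have hne : T' ≠ S := fun h => hmem (h ▸ hT')
      have h1 : ε * c T' ≤ ε * |c T'| :=
        mul_le_mul_of_nonneg_left (le_abs_self _) hε.le
      have h2 := hεT T' hT'
      simp only [hne, if_neg, if_false]
      linarith
  · rw [Finset.sum_insert hmem]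
    have h1 : ∀ T' ∈ T, (if T' = S then ε else ω T' - ε * c T') • ind n T'
        = ω T' • ind n T' - ε • (c T' • ind n T') := by
      intro T' hT'
      have hne : T' ≠ S := fun h => hmem (h ▸ hT')
      simp [hne, sub_smul, smul_smul]
    rw [Finset.sum_congr rfl h1, Finset.sum_sub_distrib, ← Finset.smul_sum, hc]
    have h2 : (fun T' => if T' = S then ε else ω T' - ε * c T') S = ε := by simp
    rw [h2, show ε • ind n S + (∑ T' ∈ T, ω T' • ind n T' - ε • ind n S)
          = ∑ T' ∈ T, ω T' • ind n T' by abel]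
    exact hsum

lemma union_balanced (n : ℕ) (T0 U V : Finset (Finset (Fin n)))
    (hU : IsT0Balanced n T0 U) (hV : IsT0Balanced n T0 V) :
    IsT0Balanced n T0 (U ∪ V) := by
  classical
  obtain ⟨γ1, ω1, hγ1, hω1, hsum1⟩ := hU
  obtain ⟨γ2, ω2, hγ2, hω2, hsum2⟩ := hV
  refine ⟨fun S => (γ1 S + γ2 S) / 2,
    fun S => ((if S ∈ U then ω1 S else 0) + (if S ∈ V then ω2 S else 0)) / 2, ?_, ?_, ?_⟩
  · intro S hS
    have := hγ1 S hS; have := hγ2 S hS; linarith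
  · intro S hS
    rcases Finset.mem_union.mp hS with h | h
    · have h1 := hω1 S h
      have h2 : (0:ℝ) ≤ if S ∈ V then ω2 S else 0 := by
        split <;> [exact (hω2 S ‹_›).le; rfl]
      simp only [if_pos h]
      linarith
    · have h1 := hω2 S h
      have h2 : (0:ℝ) ≤ if S ∈ U then ω1 S else 0 := by
        split <;> [exact (hω1 S ‹_›).le; rfl]
      simp only [if_pos h]
      linarith
  · funext i
    have e1 := congrFun hsum1 i
    have e2 := congrFun hsum2 i
    simp only [Finset.sum_apply, Pi.add_apply, Pi.smul_apply, smul_eq_mul] at e1 e2 ⊢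
    have hA : ∑ S ∈ U ∪ V, ((if S ∈ U then ω1 S else 0) + (if S ∈ V then ω2 S else 0)) / 2
          * ind n S i
        = (∑ S ∈ U ∪ V, (if S ∈ U then ω1 S * ind n S i else 0)) / 2
          + (∑ S ∈ U ∪ V, (if S ∈ V then ω2 S * ind n S i else 0)) / 2 := by
      rw [Finset.sum_congr rfl (fun S _ => by
        show ((if S ∈ U then ω1 S else 0) + (if S ∈ V then ω2 S else 0)) / 2 * ind n S i
          = ((if S ∈ U then ω1 S * ind n S i else 0)
            + (if S ∈ V then ω2 S * ind n S i else 0)) / 2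
        split_ifs <;> ring),
        ← Finset.sum_div, Finset.sum_add_distrib, add_div]
    have hB : ∑ S ∈ U ∪ V, (if S ∈ U then ω1 S * ind n S i else 0)
        = ∑ S ∈ U, ω1 S * ind n S i := by
      rw [Finset.sum_ite_mem, Finset.union_inter_cancel_left]
    have hC : ∑ S ∈ U ∪ V, (if S ∈ V then ω2 S * ind n S i else 0)
        = ∑ S ∈ V, ω2 S * ind n S i := by
      rw [Finset.sum_ite_mem, Finset.union_inter_cancel_right]
    rw [hA, hB, hC]
    have hD : ∑ S ∈ T0, (γ1 S + γ2 S) / 2 * ind n S i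
        = (∑ S ∈ T0, γ1 S * ind n S i) / 2 + (∑ S ∈ T0, γ2 S * ind n S i) / 2 := by
      rw [Finset.sum_congr rfl (fun S _ => by
        show (γ1 S + γ2 S) / 2 * ind n S i
          = (γ1 S * ind n S i + γ2 S * ind n S i) / 2
        ring), ← Finset.sum_div, Finset.sum_add_distrib, add_div]
    rw [hD]; linarith

lemma mem_spanColl {n : ℕ} {T : Finset (Finset (Fin n))} {S : Finset (Fin n)} :
    S ∈ spanColl n T ↔ ind n S ∈ Submodule.span ℝ (ind n '' (T : Set (Finset (Fin n)))) := by
  classical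
  simp [spanColl]

lemma extend_balanced (n : ℕ) (T0 T A : Finset (Finset (Fin n)))
    (hT : IsT0Balanced n T0 T)
    (hA : ∀ S ∈ A, ind n S ∈ Submodule.span ℝ (ind n '' (T : Set (Finset (Fin n))))) :
    IsT0Balanced n T0 (T ∪ A) := by
  classical
  induction A using Finset.induction with
  | empty => simpa
  | @insert a A ha ih =>
    have h1 := ih (fun S hS => hA S (mem_insert_of_mem hS))
    rw [Finset.union_insert]
    apply insert_balanced n T0 (T ∪ A) h1 a
    refine Submodule.span_mono (Set.image_mono ?_) (hA a (mem_insert_self _ _))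
    simp

/-- If `U` and `V` are `T0`-balanced, then `span(U) ∪ span(V)` (restricted to coalitions)
is `T0`-balanced. -/
theorem stmt17 (n : ℕ) (T0 U V : Finset (Finset (Fin n)))
    (hU : IsT0Balanced n T0 U) (hV : IsT0Balanced n T0 V) :
    IsT0Balanced n T0 (spanColl n U ∪ spanColl n V) := by
  have hUV := union_balanced n T0 U V hU hV
  have hsub : U ∪ V ⊆ spanColl n U ∪ spanColl n V := by
    intro S hS
    rcases Finset.mem_union.mp hS with h | h
    · exact Finset.mem_union_left _
        (mem_spanColl.mpr (Submodule.subset_span ⟨S, by simpa, rfl⟩))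
    · exact Finset.mem_union_right _
        (mem_spanColl.mpr (Submodule.subset_span ⟨S, by simpa, rfl⟩))
  have hspan : ∀ S ∈ spanColl n U ∪ spanColl n V,
      ind n S ∈ Submodule.span ℝ (ind n '' ((U ∪ V : Finset _) : Set (Finset (Fin n)))) := by
    intro S hS
    have hsub1 : (U : Set (Finset (Fin n))) ⊆ ((U ∪ V : Finset _) : Set (Finset (Fin n))) := by
      simp
    have hsub2 : (V : Set (Finset (Fin n))) ⊆ ((U ∪ V : Finset _) : Set (Finset (Fin n))) := by
      simp
    rcases Finset.mem_union.mp hS with h | h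
    · exact Submodule.span_mono (Set.image_mono hsub1) (mem_spanColl.mp h)
    · exact Submodule.span_mono (Set.image_mono hsub2) (mem_spanColl.mp h)
  have key := extend_balanced n T0 (U ∪ V) (spanColl n U ∪ spanColl n V) hUV hspan
  rwa [Finset.union_eq_right.mpr hsub] at key
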